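/- If G acts transitively on a finite set V, Q is a G-invariant partition of V (a system of blocks), and the induced action of G on Q admits a fixed-point-free element of prime-power order, then G acting on V also contains a fixed-point-free element of prime-power order. -/

import Mathlib

/-!
Write `n = p ^ a * m` for the order of `g`, with `p ∤ m`. The element `g ^ m` has order `p ^ a`,
and `a ≥ 1` because the order `p ^ l` of the permutation `g` induces on the blocks divides `n`.
If `g ^ m` fixed a point, it would fix the block containing it; since `g ^ (p ^ l)` fixes every
block and `p ^ l` is coprime to `m`, `g` itself would then fix that block.
-/

open Pointwise

theorem Subgroup.mem_of_pow_mem_of_coprime {G : Type*} [Group G] {H : Subgroup G} {g : G}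
    {a b : ℕ} (hab : a.Coprime b) (ha : g ^ a ∈ H) (hb : g ^ b ∈ H) : g ∈ H := by
  have hgcd : g ^ (a.gcd b : ℤ) ∈ H := by
    rw [Nat.gcd_eq_gcd_ab, zpow_add, zpow_mul, zpow_mul, zpow_natCast, zpow_natCast]
    exact mul_mem (zpow_mem ha _) (zpow_mem hb _)
  simpa [hab.gcd_eq_one] using hgcd

namespace Setoid.IsPartition

variable {G α : Type*} [Group G] [MulAction G α] {Q : Set (Set α)}

theorem smul_eq_of_smul_eq_of_mem (hQ : IsPartition Q) {B : Set α} (hB : B ∈ Q) {g : G}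
    (hgB : g • B ∈ Q) {v : α} (hv : v ∈ B) (hgv : g • v = v) : g • B = B :=
  eq_of_mem_eqv_class hQ.2 hgB (hgv ▸ Set.smul_mem_smul_set hv) hB hv

theorem pow_smul_ne_of_coprime (hQ : IsPartition Q) (hGQ : ∀ g : G, ∀ B ∈ Q, g • B ∈ Q)
    {g : G} (hfree : ∀ B ∈ Q, g • B ≠ B) {n m : ℕ} (hn : ∀ B ∈ Q, (g ^ n) • B = B)
    (hnm : n.Coprime m) (v : α) : (g ^ m) • v ≠ v := by
  intro hv
  obtain ⟨B, ⟨hB, hvB⟩, -⟩ := hQ.2 v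
  have hm : g ^ m ∈ MulAction.stabilizer G B :=
    hQ.smul_eq_of_smul_eq_of_mem hB (hGQ _ B hB) hvB hv
  exact hfree B hB (Subgroup.mem_of_pow_mem_of_coprime hnm (hn B hB) hm)

end Setoid.IsPartition

theorem stmt_1_general {G V : Type*} [Group G] [Fintype G] [MulAction G V]
    (Q : Set (Set V)) (hQ : Setoid.IsPartition Q)
    (hGQ : ∀ (g : G), ∀ B ∈ Q, g • B ∈ Q)
    (hyp : ∃ (g : G) (p l : ℕ), p.Prime ∧ 1 ≤ l ∧
      (∀ B ∈ Q, g • B ≠ B) ∧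
      (∀ B ∈ Q, (g ^ p ^ l) • B = B) ∧
      (∀ k : ℕ, (∀ B ∈ Q, (g ^ k) • B = B) → p ^ l ∣ k)) :
    ∃ h : G, (∀ v : V, h • v ≠ v) ∧
      ∃ p m : ℕ, p.Prime ∧ 1 ≤ m ∧ orderOf h = p ^ m := by
  obtain ⟨g, p, l, hp, hl, hfree, hfix, hdvd⟩ := hyp
  have hn : orderOf g ≠ 0 := (orderOf_pos g).ne'
  have hpl : p ^ l ∣ orderOf g := hdvd _ fun B _ ↦ by simp [pow_orderOf_eq_one]
  have hla : l ≤ (orderOf g).factorization p := (hp.pow_dvd_iff_le_factorization hn).mp hpl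
  exact ⟨g ^ ordCompl[p] (orderOf g),
    hQ.pow_smul_ne_of_coprime hGQ hfree hfix ((Nat.coprime_ordCompl hp hn).pow_left l),
    p, _, hp, hl.trans hla, orderOf_pow_orderOf_div hn (Nat.ordProj_dvd _ p)⟩

/-- If `G` acts transitively on finite `V`, `Q` is a `G`-invariant partition of `V`,
and some element of `G` induces on `Q` a fixed-point-free permutation of prime-power
order, then `G` also contains a fixed-point-free element of prime-power order on `V`. -/
theorem stmt_1 {G V : Type*} [Group G] [Fintype G] [Fintype V] [MulAction G V]
    (ht : MulAction.IsPretransitive G V)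
    (Q : Set (Set V)) (hQ : Setoid.IsPartition Q)
    (hGQ : ∀ (g : G), ∀ B ∈ Q, g • B ∈ Q)
    (hyp : ∃ (g : G) (p l : ℕ), p.Prime ∧ 1 ≤ l ∧
      (∀ B ∈ Q, g • B ≠ B) ∧
      (∀ B ∈ Q, (g ^ p ^ l) • B = B) ∧
      (∀ k : ℕ, (∀ B ∈ Q, (g ^ k) • B = B) → p ^ l ∣ k)) :
    ∃ h : G, (∀ v : V, h • v ≠ v) ∧
      ∃ p m : ℕ, p.Prime ∧ 1 ≤ m ∧ orderOf h = p ^ m :=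
  stmt_1_general Q hQ hGQ hyp
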